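/- Let S be a seminormal affine monoid whose algebra R = k[S] is F-split, D a RUF of C, and suppose π_a(x^u) = x^w ≠ 0 with w ∈ S ∩ D, where a ∈ (1/q)M gives π_a ∈ Hom_R(F^e_*R, R) and u ∈ (1/q)S. Then a ∈ span(D) and u ∈ D. -/

import Mathlib

noncomputable section

noncomputable section

def emb (d : ℕ) : (Fin d → ℤ) →+ (Fin d → ℝ) where
  toFun m := fun i => (m i : ℝ)
  map_zero' := by ext i; simp
  map_add' x y := by ext i; simp [Pi.add_apply]

def IsFace (d : ℕ) (C D : Set (Fin d → ℝ)) : Prop :=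
  ∃ u : (Fin d → ℝ) →ₗ[ℝ] ℝ, (∀ x ∈ C, 0 ≤ u x) ∧ D = {x ∈ C | u x = 0}

def latticeOf (d : ℕ) (S : AddSubmonoid (Fin d → ℤ)) (D : Set (Fin d → ℝ)) :
    AddSubgroup (Fin d → ℤ) :=
  AddSubgroup.closure ((S : Set (Fin d → ℤ)) ∩ (emb d) ⁻¹' D)

def latIn (d : ℕ) (D : Set (Fin d → ℝ)) : AddSubgroup (Fin d → ℤ) :=
  AddSubgroup.comap (emb d) (Submodule.span ℝ D).toAddSubgroup

def IsRelSat (d : ℕ) (S : AddSubmonoid (Fin d → ℤ)) (C D : Set (Fin d → ℝ)) : Prop :=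
  IsFace d C D ∧ D ≠ C ∧
    latticeOf d S D =
      (⨅ D' ∈ {D' : Set (Fin d → ℝ) | IsFace d C D' ∧ D ⊂ D'}, latticeOf d S D') ⊓ latIn d D

def IsRUF (d : ℕ) (S : AddSubmonoid (Fin d → ℤ)) (C D : Set (Fin d → ℝ)) : Prop :=
  IsFace d C D ∧ ¬ IsRelSat d S C D

def Seminormal (d : ℕ) (S : AddSubmonoid (Fin d → ℤ)) (C : Set (Fin d → ℝ)) : Prop :=
  ∀ D : Set (Fin d → ℝ), IsFace d C D →
    ∀ m : Fin d → ℤ, emb d m ∈ intrinsicInterior ℝ D → (m ∈ S ↔ m ∈ latticeOf d S D)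

def coneOf (d : ℕ) (S : AddSubmonoid (Fin d → ℤ)) : Set (Fin d → ℝ) :=
  ↑(Submodule.span NNReal (emb d '' (S : Set (Fin d → ℤ))))

def pFace (d p : ℕ) (S : AddSubmonoid (Fin d → ℤ)) (D : Set (Fin d → ℝ)) : Prop :=
  p ∣ (latticeOf d S D).relIndex (latIn d D)

def Mtilde (d p : ℕ) (S : AddSubmonoid (Fin d → ℤ)) (D : Set (Fin d → ℝ)) : Set (Fin d → ℤ) :=
  {x | x ∈ latIn d D ∧ ∃ m : ℤ, IsCoprime m (p : ℤ) ∧ m • x ∈ latticeOf d S D}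

/-!
Suppose `u ∉ D`. As `D` is not relatively saturated, some `m ∈ span D` lies in the lattice of
every face strictly containing `D` but not in the lattice of `D`. Let `w₀` be the sum of the
generators on `D` and `G` the face in whose relative interior `u + w₀` lies; `G` strictly contains
`D`. For `K` large, `z = m + K • w₀` makes `u + q • z` a lattice point of `G` in `u + w₀ + G`,
hence in the relative interior of `G`, and seminormality puts it in `S`. Applying `π_a` gives
`w + z ∈ S ∩ span D`, so `m ≡ z ≡ 0` modulo the lattice of `D`: a contradiction.
The face `G` comes from a representation of `u + w₀` by the generators with maximal support,
combined with Farkas' lemma for finitely generated cones.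
-/

section PolyhedralCone

open Finset

variable {E : Type*} [NormedAddCommGroup E] [NormedSpace ℝ E] {ι : Type*} [Fintype ι]

theorem sum_subtype_eq_sum_of_eq_zero {M : Type*} [AddCommMonoid M] {p : ι → Prop}
    {_ : Fintype {i // p i}} {f : ι → M} (hf : ∀ i, ¬ p i → f i = 0) :
    ∑ i : {i // p i}, f i = ∑ i, f i :=
  Fintype.sum_of_injective _ Subtype.val_injective _ f
    (fun i hi => hf i fun hp => hi ⟨⟨i, hp⟩, rfl⟩) fun _ => rfl

theorem mem_span_nnreal_range_iff {g : ι → E} {x : E} :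
    x ∈ Submodule.span NNReal (Set.range g) ↔
      ∃ c : ι → ℝ, (∀ i, 0 ≤ c i) ∧ ∑ i, c i • g i = x := by
  rw [Submodule.mem_span_range_iff_exists_fun]
  exact ⟨fun ⟨c, hc⟩ => ⟨fun i => c i, fun i => (c i).2, hc⟩,
    fun ⟨c, hc0, hc⟩ => ⟨fun i => ⟨c i, hc0 i⟩, hc⟩⟩

theorem sum_smul_mem_span_nnreal_range {g : ι → E} {c : ι → ℝ} (hc : ∀ i, 0 ≤ c i) :
    ∑ i, c i • g i ∈ Submodule.span NNReal (Set.range g) :=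
  mem_span_nnreal_range_iff.2 ⟨c, hc, rfl⟩

theorem convex_span_nnreal (X : Set E) : Convex ℝ (Submodule.span NNReal X : Set E) :=
  fun _ hy _ hz a b ha hb _ =>
    add_mem (Submodule.smul_mem _ (⟨a, ha⟩ : NNReal) hy) (Submodule.smul_mem _ (⟨b, hb⟩ : NNReal) hz)

theorem nonneg_of_mem_span_nnreal {X : Set E} {v : E →ₗ[ℝ] ℝ} (hv : ∀ x ∈ X, 0 ≤ v x)
    {x : E} (hx : x ∈ Submodule.span NNReal X) : 0 ≤ v x := by
  induction hx using Submodule.span_induction with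
  | mem x h => exact hv x h
  | zero => simp
  | add x y _ _ hx hy => rw [map_add]; positivity
  | smul c x _ hx => rw [NNReal.smul_def, map_smul, smul_eq_mul]; exact mul_nonneg c.2 hx

theorem eq_zero_of_apply_sum_smul_eq_zero {g : ι → E} {v : E →ₗ[ℝ] ℝ}
    (hv : ∀ i, 0 ≤ v (g i)) {c : ι → ℝ} (hc : ∀ i, 0 ≤ c i) (hcv : v (∑ i, c i • g i) = 0)
    {i : ι} (hi : v (g i) ≠ 0) : c i = 0 := by
  simp only [map_sum, map_smul, smul_eq_mul] at hcv
  have := (sum_eq_zero_iff_of_nonneg fun j _ => mul_nonneg (hc j) (hv j)).1 hcv i (mem_univ i)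
  exact (mul_eq_zero.1 this).resolve_right hi

/-- Conic Carathéodory step: move `c` along a linear dependence of its generators until a
coefficient vanishes. -/
theorem exists_nonneg_repr_support_ssubset {g : ι → E} {c : ι → ℝ} (hc : ∀ i, 0 ≤ c i)
    (hli : ¬ LinearIndependent ℝ (fun i : {i // c i ≠ 0} => g i)) :
    ∃ c' : ι → ℝ, (∀ i, 0 ≤ c' i) ∧ ∑ i, c' i • g i = ∑ i, c i • g i ∧
      univ.filter (c' · ≠ 0) ⊂ univ.filter (c · ≠ 0) := by
  classical
  obtain ⟨f, hf, i₀, hfi₀⟩ := Fintype.not_linearIndependent_iff.1 hli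
  -- extend `f` by zero and normalise it so that it is positive at `i₀`
  set G : ι → ℝ := fun i => if h : c i ≠ 0 then f ⟨i, h⟩ / f i₀ else 0
  have hG0 : ∀ i, c i = 0 → G i = 0 := fun i hi => by simp [G, hi]
  have hGsum : ∑ i, G i • g i = 0 := by
    rw [← sum_subtype_eq_sum_of_eq_zero (p := fun i => c i ≠ 0)
      fun i hi => by rw [hG0 i (not_not.1 hi), zero_smul]]
    calc ∑ i : {i // c i ≠ 0}, G i • g i = (f i₀)⁻¹ • ∑ i, f i • g i := by
          rw [smul_sum]
          refine sum_congr rfl fun i _ => ?_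
          simp only [G, dif_pos i.2, div_eq_inv_mul, mul_smul]
      _ = 0 := by rw [hf, smul_zero]
  have hpos : (univ.filter (0 < G ·)).Nonempty :=
    ⟨i₀, mem_filter.2 ⟨mem_univ _, by simp [G, i₀.2, hfi₀]⟩⟩
  obtain ⟨i₁, hi₁, hmin⟩ := exists_min_image _ (fun i => c i / G i) hpos
  have hGi₁ : 0 < G i₁ := (mem_filter.1 hi₁).2
  set r := c i₁ / G i₁
  have hr : 0 ≤ r := div_nonneg (hc i₁) hGi₁.le
  refine ⟨fun i => c i - r * G i, fun i => ?_, ?_, ?_⟩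
  · rcases le_or_gt (G i) 0 with h | h
    · nlinarith [hc i]
    · have := hmin i (mem_filter.2 ⟨mem_univ _, h⟩)
      rw [div_le_div_iff₀ hGi₁ h] at this
      rw [sub_nonneg, div_mul_eq_mul_div, div_le_iff₀ hGi₁]
      linarith
  · simp only [sub_smul, sum_sub_distrib, mul_smul, ← smul_sum, hGsum, smul_zero, sub_zero]
  · refine ssubset_of_subset_of_ne (fun i => ?_) fun h => ?_
    · simp only [mem_filter, mem_univ, true_and]
      exact fun hi hci => hi (by rw [hci, hG0 i hci, mul_zero, sub_zero])
    · have hi₁ : i₁ ∈ univ.filter (c · ≠ 0) := by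
        refine mem_filter.2 ⟨mem_univ _, fun h0 => ?_⟩
        rw [hG0 i₁ h0] at hGi₁; exact lt_irrefl _ hGi₁
      rw [← h, mem_filter] at hi₁
      exact hi₁.2 (by simp only [r, div_mul_cancel₀ _ hGi₁.ne', sub_self])

theorem exists_linearIndependent_nonneg_repr {g : ι → E} {c : ι → ℝ} (hc : ∀ i, 0 ≤ c i) :
    ∃ c' : ι → ℝ, (∀ i, 0 ≤ c' i) ∧ ∑ i, c' i • g i = ∑ i, c i • g i ∧
      LinearIndependent ℝ (fun i : {i // c' i ≠ 0} => g i) := by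
  classical
  induction h : (univ.filter (c · ≠ 0)).card using Nat.strong_induction_on generalizing c with
  | _ n ih =>
    by_cases hli : LinearIndependent ℝ (fun i : {i // c i ≠ 0} => g i)
    · exact ⟨c, hc, rfl, hli⟩
    obtain ⟨c₁, hc₁, hsum₁, hlt⟩ := exists_nonneg_repr_support_ssubset hc hli
    obtain ⟨c', hc', hsum', hli'⟩ := ih _ (h ▸ card_lt_card hlt) hc₁ rfl
    exact ⟨c', hc', hsum'.trans hsum₁, hli'⟩

theorem isClosed_span_nnreal_range (g : ι → E) :
    IsClosed (Submodule.span NNReal (Set.range g) : Set E) := by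
  classical
  have hunion : (Submodule.span NNReal (Set.range g) : Set E) =
      ⋃ s : {s : Set ι // LinearIndependent ℝ (fun i : s => g i)},
        Fintype.linearCombination ℝ (fun i : s.1 => g i) '' {c | ∀ i, 0 ≤ c i} := by
    ext x
    simp only [SetLike.mem_coe, Set.mem_iUnion, Set.mem_image, Fintype.linearCombination_apply]
    constructor
    · intro hx
      obtain ⟨c, hc, rfl⟩ := mem_span_nnreal_range_iff.1 hx
      obtain ⟨c', hc', hsum, hli⟩ := exists_linearIndependent_nonneg_repr (g := g) hc
      refine ⟨⟨{i | c' i ≠ 0}, hli⟩, fun i => c' i, fun i => hc' i, ?_⟩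
      rw [← hsum]
      exact sum_subtype_eq_sum_of_eq_zero (p := (· ∈ {i | c' i ≠ 0}))
        (f := fun i => c' i • g i) fun i hi => by rw [not_not.1 hi, zero_smul]
    · rintro ⟨s, c, hc, rfl⟩
      exact sum_smul_mem_span_nnreal_range (g := fun i : s.1 => g i) hc
        |> Submodule.span_mono (Set.range_comp_subset_range _ g)
  rw [hunion]
  refine isClosed_iUnion_of_finite fun s => ?_
  have hinj := linearIndependent_iff_injective_fintypeLinearCombination.1 s.2
  exact (LinearMap.isClosedEmbedding_of_injective (LinearMap.ker_eq_bot.2 hinj)).isClosedMap _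
    (isClosed_Ici (a := (0 : s.1 → ℝ)))

theorem exists_nonneg_of_notMem_span_nnreal {g : ι → E} {x : E}
    (hx : x ∉ Submodule.span NNReal (Set.range g)) :
    ∃ v : E →ₗ[ℝ] ℝ, (∀ i, 0 ≤ v (g i)) ∧ v x < 0 := by
  obtain ⟨f, u, hfx, hfC⟩ := geometric_hahn_banach_point_closed (convex_span_nnreal _)
    (isClosed_span_nnreal_range g) hx
  have hu : u < 0 := by simpa using hfC 0 (zero_mem _)
  refine ⟨f.toLinearMap, fun i => ?_, hfx.trans hu⟩
  by_contra! h
  rw [ContinuousLinearMap.coe_coe] at h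
  have := hfC ((u / f (g i)) • g i) <| Submodule.smul_mem _
    (⟨u / f (g i), div_nonneg_of_nonpos hu.le h.le⟩ : NNReal) (Submodule.subset_span ⟨i, rfl⟩)
  rw [map_smul, smul_eq_mul, div_mul_cancel₀ _ h.ne] at this
  exact lt_irrefl _ this

theorem sum_smul_mem_intrinsicInterior {g : ι → E} {ν : ι → ℝ} (hν : ∀ i, 0 < ν i) :
    ∑ i, ν i • g i ∈ intrinsicInterior ℝ (Submodule.span NNReal (Set.range g) : Set E) := by
  set K : Set E := (Submodule.span NNReal (Set.range g) : Set E)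
  set Φ := Fintype.linearCombination ℝ g
  have hKΦ : K ⊆ LinearMap.range Φ := fun x hx => by
    obtain ⟨c, -, rfl⟩ := mem_span_nnreal_range_iff.1 hx
    exact ⟨c, Fintype.linearCombination_apply ℝ g c⟩
  -- `Φ` is open onto its range, which contains `affineSpan K`; the image of the open positive
  -- orthant is then a relative neighbourhood of the point inside `K`
  have hopen : IsOpenMap Φ.rangeRestrict.toContinuousLinearMap :=
    ContinuousLinearMap.isOpenMap _ Φ.surjective_rangeRestrict
  obtain ⟨O, hO, hOΦ⟩ := isOpen_induced_iff.1 <|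
    hopen _ (isOpen_set_pi Set.finite_univ fun _ _ => isOpen_Ioi (a := (0 : ℝ)))
  have hOK : ∀ y ∈ O, y ∈ LinearMap.range Φ → y ∈ K := fun y hyO hyΦ => by
    have : (⟨y, hyΦ⟩ : LinearMap.range Φ) ∈ Subtype.val ⁻¹' O := hyO
    rw [hOΦ] at this
    obtain ⟨c, hc, hcy⟩ := this
    obtain rfl : ∑ i, c i • g i = y := congrArg Subtype.val hcy
    exact sum_smul_mem_span_nnreal_range fun i => (hc i (Set.mem_univ i)).le
  have hxO : ∑ i, ν i • g i ∈ O := by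
    have : (⟨_, Φ.mem_range_self ν⟩ : LinearMap.range Φ) ∈ Subtype.val ⁻¹' O :=
      hOΦ ▸ ⟨ν, fun i _ => hν i, rfl⟩
    exact this
  have haff : (affineSpan ℝ K : Set E) ⊆ LinearMap.range Φ := by
    have : affineSpan ℝ K ≤ (LinearMap.range Φ).toAffineSubspace :=
      affineSpan_le.2 fun y hy => Submodule.mem_toAffineSubspace.2 (hKΦ hy)
    exact fun y hy => Submodule.mem_toAffineSubspace.1 (this hy)
  rw [mem_intrinsicInterior]
  refine ⟨⟨_, subset_affineSpan ℝ K (sum_smul_mem_span_nnreal_range fun i => (hν i).le)⟩,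
    mem_interior.2 ⟨Subtype.val ⁻¹' O, fun z hz => hOK z hz (haff z.2),
      hO.preimage continuous_subtype_val, hxO⟩, rfl⟩

theorem setOf_mem_span_nnreal_range_eq_zero {g : ι → E} {v : E →ₗ[ℝ] ℝ}
    (hv : ∀ i, 0 ≤ v (g i)) :
    {x ∈ (Submodule.span NNReal (Set.range g) : Set E) | v x = 0} =
      Submodule.span NNReal (Set.range fun i : {i // v (g i) = 0} => g i) := by
  ext x
  constructor
  · rintro ⟨hx, hvx⟩
    obtain ⟨c, hc, rfl⟩ := mem_span_nnreal_range_iff.1 hx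
    rw [← sum_subtype_eq_sum_of_eq_zero (p := fun i => v (g i) = 0) fun i hi => by
      rw [eq_zero_of_apply_sum_smul_eq_zero hv hc hvx hi, zero_smul]]
    exact sum_smul_mem_span_nnreal_range fun i => hc i
  · intro hx
    refine ⟨Submodule.span_mono (Set.range_comp_subset_range _ g) hx, le_antisymm ?_ ?_⟩
    · simpa using nonneg_of_mem_span_nnreal (v := -v) (by rintro _ ⟨i, rfl⟩; simp [i.2]) hx
    · exact nonneg_of_mem_span_nnreal (by rintro _ ⟨i, rfl⟩; simp [i.2]) hx

theorem exists_nonneg_repr_pos_of_neg_mem {g : ι → E} {c : ι → ℝ} (hc : ∀ i, 0 ≤ c i) {j : ι}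
    (hj : -g j ∈ Submodule.span NNReal
      (Set.range fun o : Option ι => o.elim (-∑ i, c i • g i) g)) :
    ∃ c' : ι → ℝ, (∀ i, 0 ≤ c' i) ∧ ∑ i, c' i • g i = ∑ i, c i • g i ∧ 0 < c' j ∧
      ∀ i, 0 < c i → 0 < c' i := by
  classical
  obtain ⟨l, hl, hlsum⟩ := mem_span_nnreal_range_iff.1 hj
  rw [Fintype.sum_option] at hlsum
  simp only [Option.elim_none, Option.elim_some] at hlsum
  -- `(1 + l none) • x = x + g j + ∑ l (some i) • g i`
  set μ := l none
  have hμ : 0 < 1 + μ := by linarith [hl none]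
  refine ⟨fun i => (1 + μ)⁻¹ * (c i + (Pi.single j 1 : ι → ℝ) i + l (some i)), fun i => ?_, ?_, ?_,
    fun i hi => ?_⟩
  · have : (0 : ℝ) ≤ (Pi.single j 1 : ι → ℝ) i := by by_cases h : i = j <;> simp [h]
    exact mul_nonneg (inv_nonneg.2 hμ.le) (by linarith [hc i, hl (some i)])
  · simp only [mul_smul, ← smul_sum, add_smul, sum_add_distrib, Pi.single_apply, ite_smul,
      one_smul, zero_smul, sum_ite_eq', mem_univ, if_true]
    rw [inv_smul_eq_iff₀ hμ.ne', add_smul, one_smul]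
    linear_combination (norm := module) hlsum
  · simp only [Pi.single_eq_same]
    exact mul_pos (inv_pos.2 hμ) (by linarith [hc j, hl (some j)])
  · have : (0 : ℝ) ≤ (Pi.single j 1 : ι → ℝ) i := by by_cases h : i = j <;> simp [h]
    exact mul_pos (inv_pos.2 hμ) (by linarith [hl (some i)])

theorem exists_supporting_nonneg_repr {g : ι → E} {x : E}
    (hx : x ∈ Submodule.span NNReal (Set.range g)) :
    ∃ v : E →ₗ[ℝ] ℝ, (∀ i, 0 ≤ v (g i)) ∧ v x = 0 ∧
      ∃ c : ι → ℝ, (∀ i, 0 ≤ c i) ∧ (∀ i, v (g i) = 0 → 0 < c i) ∧ ∑ i, c i • g i = x := by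
  classical
  set Rep := {c : ι → ℝ | (∀ i, 0 ≤ c i) ∧ ∑ i, c i • g i = x}
  obtain ⟨c₀, hc₀⟩ : Rep.Nonempty := mem_span_nnreal_range_iff.1 hx
  -- Take a representation `c` of `x` with the largest support. For `j` outside it, maximality
  -- and Farkas give `v j` vanishing at `x` and positive at `g j`; their sum is the functional.
  set supports := univ.filter fun t : Finset ι => ∃ c ∈ Rep, univ.filter (0 < c ·) = t
  obtain ⟨t, ht, hmax⟩ := exists_max_image supports card
    ⟨_, mem_filter.2 ⟨mem_univ _, c₀, hc₀, rfl⟩⟩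
  obtain ⟨c, ⟨hc, hcx⟩, rfl⟩ := (mem_filter.1 ht).2
  have hsep : ∀ j, ∃ v : E →ₗ[ℝ] ℝ, (∀ i, 0 ≤ v (g i)) ∧ v x = 0 ∧ (c j = 0 → 0 < v (g j)) := by
    intro j
    by_cases hj : c j = 0
    · have hnot : -g j ∉ Submodule.span NNReal
          (Set.range fun o : Option ι => o.elim (-∑ i, c i • g i) g) := fun hmem => by
        obtain ⟨c', hc', hc'x, hc'j, hcc'⟩ := exists_nonneg_repr_pos_of_neg_mem hc hmem
        refine (hmax _ (mem_filter.2 ⟨mem_univ _, c', ⟨hc', hc'x.trans hcx⟩, rfl⟩)).not_gt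
          (card_lt_card ⟨fun i => by simpa using hcc' i, fun h => ?_⟩)
        simpa [hj] using h (mem_filter.2 ⟨mem_univ j, hc'j⟩)
      obtain ⟨v, hv, hvj⟩ := exists_nonneg_of_notMem_span_nnreal hnot
      have hvx : 0 ≤ v x := nonneg_of_mem_span_nnreal (by rintro _ ⟨i, rfl⟩; exact hv (some i)) hx
      have := hv none
      simp only [Option.elim_none, hcx, map_neg, neg_nonneg] at this
      exact ⟨v, fun i => hv (some i), le_antisymm this hvx,
        fun _ => by simpa using hvj⟩
    · exact ⟨0, by simp, by simp, fun h => absurd h hj⟩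
  choose v hv hvx hvpos using hsep
  refine ⟨∑ j, v j, fun i => ?_, by simp [hvx], c, hc, fun i hi => ?_, hcx⟩
  · simpa using sum_nonneg fun j _ => hv j i
  · refine (hc i).lt_of_ne' fun hci => (hvpos i hci).ne' ?_
    rw [LinearMap.sum_apply] at hi
    exact (sum_eq_zero_iff_of_nonneg fun j _ => hv j i).1 hi i (mem_univ i)

theorem exists_supporting_add_mem_intrinsicInterior {g : ι → E} {x : E}
    (hx : x ∈ Submodule.span NNReal (Set.range g)) :
    ∃ v : E →ₗ[ℝ] ℝ, (∀ i, 0 ≤ v (g i)) ∧ v x = 0 ∧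
      ∀ y ∈ Submodule.span NNReal (Set.range g), v y = 0 →
        x + y ∈ intrinsicInterior ℝ
          {z ∈ (Submodule.span NNReal (Set.range g) : Set E) | v z = 0} := by
  obtain ⟨v, hv, hvx, c, hc, hcpos, rfl⟩ := exists_supporting_nonneg_repr hx
  refine ⟨v, hv, hvx, fun y hy hvy => ?_⟩
  obtain ⟨d, hd, rfl⟩ := mem_span_nnreal_range_iff.1 hy
  have hsum : ∑ i, c i • g i + ∑ i, d i • g i =
      ∑ i : {i // v (g i) = 0}, (c i + d i) • g i := by
    rw [sum_subtype_eq_sum_of_eq_zero (p := fun i => v (g i) = 0)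
      (f := fun i => (c i + d i) • g i) fun i hi => by
        rw [eq_zero_of_apply_sum_smul_eq_zero hv hc hvx hi,
          eq_zero_of_apply_sum_smul_eq_zero hv hd hvy hi, add_zero, zero_smul],
      ← sum_add_distrib]
    exact sum_congr rfl fun i _ => (add_smul _ _ _).symm
  rw [setOf_mem_span_nnreal_range_eq_zero hv, hsum]
  exact sum_smul_mem_intrinsicInterior fun i => add_pos_of_pos_of_nonneg (hcpos i i.2) (hd i)

theorem exists_add_nsmul_sum_mem_span_nnreal {g : ι → E} {x : E}
    (hx : x ∈ Submodule.span ℝ (Set.range g)) :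
    ∃ K : ℕ, x + K • ∑ i, g i ∈ Submodule.span NNReal (Set.range g) := by
  obtain ⟨c, rfl⟩ := (Submodule.mem_span_range_iff_exists_fun ℝ).1 hx
  obtain ⟨K, hK⟩ := exists_nat_ge (∑ i, |c i|)
  refine ⟨K, ?_⟩
  have : ∑ i, c i • g i + K • ∑ i, g i = ∑ i, (c i + K) • g i := by
    simp only [add_smul, sum_add_distrib, smul_sum, Nat.cast_smul_eq_nsmul]
  rw [this]
  refine sum_smul_mem_span_nnreal_range fun i => ?_
  have := (abs_le.1 ((single_le_sum (fun j _ => abs_nonneg (c j)) (mem_univ i)).trans hK)).1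
  linarith

theorem eq_zero_of_forall_add_nsmul_mem {D : Set E} {w₀ : E}
    (habs : ∀ z ∈ Submodule.span ℝ D, ∃ K : ℕ, z + K • w₀ ∈ D) {v : E →ₗ[ℝ] ℝ}
    (hv : ∀ x ∈ D, 0 ≤ v x) (hvw₀ : v w₀ = 0) {z : E} (hz : z ∈ Submodule.span ℝ D) :
    v z = 0 := by
  obtain ⟨K, hK⟩ := habs z hz
  obtain ⟨K', hK'⟩ := habs (-z) (neg_mem hz)
  have h := hv _ hK
  have h' := hv _ hK'
  simp only [map_add, map_neg, map_nsmul, hvw₀, smul_zero, add_zero] at h h'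
  linarith

end PolyhedralCone

section AffineMonoid

variable {d : ℕ} {S : AddSubmonoid (Fin d → ℤ)}

theorem emb_mem_coneOf {s : Fin d → ℤ} (hs : s ∈ S) : emb d s ∈ coneOf d S :=
  Submodule.subset_span (Set.mem_image_of_mem _ hs)

theorem coneOf_eq_span_range {T : Finset (Fin d → ℤ)}
    (hT : AddSubmonoid.closure (T : Set (Fin d → ℤ)) = S) :
    coneOf d S = Submodule.span NNReal (Set.range fun τ : T => emb d τ) := by
  refine congrArg SetLike.coe (le_antisymm (Submodule.span_le.2 ?_) (Submodule.span_mono ?_))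
  · rintro _ ⟨s, hs, rfl⟩
    rw [SetLike.mem_coe, ← hT] at hs
    induction hs using AddSubmonoid.closure_induction with
    | mem τ hτ => exact Submodule.subset_span ⟨⟨τ, hτ⟩, rfl⟩
    | zero => rw [map_zero]; exact zero_mem _
    | add _ _ _ _ hx hy => rw [map_add]; exact add_mem hx hy
  · rintro _ ⟨τ, rfl⟩
    exact ⟨τ, hT ▸ AddSubmonoid.subset_closure τ.2, rfl⟩

/-- `w₀` is the sum of the generators lying on the face. -/
theorem exists_mem_face_forall_add_nsmul_mem (hfg : S.FG) {ℓ : (Fin d → ℝ) →ₗ[ℝ] ℝ}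
    (hℓ : ∀ x ∈ coneOf d S, 0 ≤ ℓ x) :
    ∃ w₀ ∈ S, emb d w₀ ∈ {x ∈ coneOf d S | ℓ x = 0} ∧
      ∀ z ∈ Submodule.span ℝ {x ∈ coneOf d S | ℓ x = 0},
        ∃ K : ℕ, z + K • emb d w₀ ∈ {x ∈ coneOf d S | ℓ x = 0} := by
  obtain ⟨T, hT⟩ := hfg
  have hC := coneOf_eq_span_range hT
  have hℓg : ∀ τ : T, 0 ≤ ℓ (emb d τ) := fun τ =>
    hℓ _ (emb_mem_coneOf (hT ▸ AddSubmonoid.subset_closure τ.2))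
  rw [hC, setOf_mem_span_nnreal_range_eq_zero hℓg]
  set J := {τ : T // ℓ (emb d τ) = 0}
  have hsum : emb d (∑ j : J, (j : Fin d → ℤ)) = ∑ j : J, emb d j := map_sum _ _ _
  refine ⟨∑ j : J, (j : Fin d → ℤ), sum_mem fun j _ => hT ▸ AddSubmonoid.subset_closure j.1.2,
    ?_, fun z hz => ?_⟩
  · rw [hsum]
    exact sum_mem fun j _ => Submodule.subset_span ⟨j, rfl⟩
  · have hz' : z ∈ Submodule.span ℝ (Set.range fun j : J => emb d j) :=
      Submodule.span_le (p := Submodule.span ℝ _).2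
        (fun _ hx => Submodule.span_le_restrictScalars NNReal ℝ _ hx) hz
    rw [hsum]
    exact exists_add_nsmul_sum_mem_span_nnreal hz'

theorem Seminormal.exists_face_forall_mem (hfg : S.FG) (hsn : Seminormal d S (coneOf d S))
    {x₀ : Fin d → ℤ} (hx₀ : x₀ ∈ S) :
    ∃ v : (Fin d → ℝ) →ₗ[ℝ] ℝ, (∀ x ∈ coneOf d S, 0 ≤ v x) ∧ v (emb d x₀) = 0 ∧
      ∀ s ∈ latticeOf d S {x ∈ coneOf d S | v x = 0},
        emb d s - emb d x₀ ∈ {x ∈ coneOf d S | v x = 0} → s ∈ S := by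
  obtain ⟨T, hT⟩ := hfg
  have hC := coneOf_eq_span_range hT
  obtain ⟨v, hv, hvx₀, hint⟩ :=
    exists_supporting_add_mem_intrinsicInterior (hC ▸ emb_mem_coneOf hx₀)
  have hvC : ∀ x ∈ coneOf d S, 0 ≤ v x := fun x hx =>
    nonneg_of_mem_span_nnreal (by rintro _ ⟨τ, rfl⟩; exact hv τ) (hC ▸ hx)
  refine ⟨v, hvC, hvx₀, fun s hs hsx₀ => (hsn _ ⟨v, hvC, rfl⟩ s ?_).2 hs⟩
  obtain ⟨hsC, hsv⟩ := hsx₀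
  rw [hC] at hsC ⊢
  simpa using hint _ hsC hsv

theorem latticeOf_mono {D D' : Set (Fin d → ℝ)} (h : D ⊆ D') :
    latticeOf d S D ≤ latticeOf d S D' :=
  AddSubgroup.closure_mono (Set.inter_subset_inter_right _ (Set.preimage_mono h))

theorem latticeOf_le_latIn (D : Set (Fin d → ℝ)) : latticeOf d S D ≤ latIn d D :=
  (AddSubgroup.closure_le _).2 fun _ hx => Submodule.subset_span hx.2

theorem exists_of_not_isRelSat {C D : Set (Fin d → ℝ)} (hD : IsFace d C D)
    (hsat : ¬ IsRelSat d S C D) (hDC : D ≠ C) :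
    ∃ m ∈ latIn d D, m ∉ latticeOf d S D ∧
      ∀ D', IsFace d C D' → D ⊂ D' → m ∈ latticeOf d S D' := by
  have hle : latticeOf d S D ≤
      (⨅ D' ∈ {D' | IsFace d C D' ∧ D ⊂ D'}, latticeOf d S D') ⊓ latIn d D :=
    le_inf (le_iInf₂ fun _ hD' => latticeOf_mono hD'.2.subset) (latticeOf_le_latIn D)
  obtain ⟨m, hm, hmD⟩ := SetLike.exists_of_lt (hle.lt_of_ne fun h => hsat ⟨hD, hDC, h⟩)
  rw [AddSubgroup.mem_inf, AddSubgroup.mem_iInf] at hm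
  exact ⟨m, hm.2, hmD, fun D' h₁ h₂ => AddSubgroup.mem_iInf.1 (hm.1 D') ⟨h₁, h₂⟩⟩

theorem mem_latticeOf_of_mem_span {ℓ : (Fin d → ℝ) →ₗ[ℝ] ℝ} {t : Fin d → ℤ} (ht : t ∈ S)
    (hspan : emb d t ∈ Submodule.span ℝ {x ∈ coneOf d S | ℓ x = 0}) :
    t ∈ latticeOf d S {x ∈ coneOf d S | ℓ x = 0} :=
  AddSubgroup.subset_closure
    ⟨ht, emb_mem_coneOf ht, Submodule.span_le (p := LinearMap.ker ℓ).2 (fun _ hx => hx.2) hspan⟩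

theorem add_mem_of_div_mem {q : ℕ} (hq : 0 < q) {a u w z : Fin d → ℤ}
    (heq : ∀ i, a i + u i = (q : ℤ) * w i)
    (hhom : ∀ s ∈ S, (∀ i, (q : ℤ) ∣ a i + s i) → (fun i => (a i + s i) / (q : ℤ)) ∈ S)
    (hs : u + q • z ∈ S) : w + z ∈ S := by
  have h : ∀ i, a i + (u + q • z) i = q * (w + z) i := fun i => by
    simp only [Pi.add_apply, nsmul_eq_mul, Pi.mul_apply, Pi.natCast_apply]
    linear_combination heq i
  convert hhom _ hs fun i => ⟨_, h i⟩ using 1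
  funext i
  rw [h, Int.mul_ediv_cancel_left _ (by exact_mod_cast hq.ne')]

theorem Seminormal.exists_ssuperset_face_forall_mem (hfg : S.FG)
    (hsn : Seminormal d S (coneOf d S)) {ℓ : (Fin d → ℝ) →ₗ[ℝ] ℝ} {u : Fin d → ℤ} (hu : u ∈ S)
    (huD : emb d u ∉ {x ∈ coneOf d S | ℓ x = 0}) {w₀ : Fin d → ℤ} (hw₀S : w₀ ∈ S)
    (habs : ∀ z ∈ Submodule.span ℝ {x ∈ coneOf d S | ℓ x = 0},
      ∃ K : ℕ, z + K • emb d w₀ ∈ {x ∈ coneOf d S | ℓ x = 0}) :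
    ∃ G, IsFace d (coneOf d S) G ∧ {x ∈ coneOf d S | ℓ x = 0} ⊂ G ∧ emb d u ∈ G ∧
      ∀ s ∈ latticeOf d S G, emb d s - emb d (u + w₀) ∈ G → s ∈ S := by
  obtain ⟨v, hv, hvx₀, hG⟩ := hsn.exists_face_forall_mem hfg (add_mem hu hw₀S)
  obtain ⟨hvu, hvw₀⟩ := (add_eq_zero_iff_of_nonneg (hv _ (emb_mem_coneOf hu))
    (hv _ (emb_mem_coneOf hw₀S))).1 (by rwa [← map_add, ← map_add])
  refine ⟨_, ⟨v, hv, rfl⟩, ⟨fun x hx => ⟨hx.1, ?_⟩, fun h => huD (h ⟨emb_mem_coneOf hu, hvu⟩)⟩,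
    ⟨emb_mem_coneOf hu, hvu⟩, hG⟩
  exact eq_zero_of_forall_add_nsmul_mem habs (fun y hy => hv y hy.1) hvw₀
    (Submodule.subset_span hx)

theorem exists_sub_mem_latticeOf_forall_add_nsmul_mem (hfg : S.FG)
    (hsn : Seminormal d S (coneOf d S)) {ℓ : (Fin d → ℝ) →ₗ[ℝ] ℝ}
    (hℓ : ∀ x ∈ coneOf d S, 0 ≤ ℓ x) {u : Fin d → ℤ} (hu : u ∈ S)
    (huD : emb d u ∉ {x ∈ coneOf d S | ℓ x = 0}) {m : Fin d → ℤ}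
    (hmD : emb d m ∈ Submodule.span ℝ {x ∈ coneOf d S | ℓ x = 0})
    (hmfaces : ∀ D', IsFace d (coneOf d S) D' → {x ∈ coneOf d S | ℓ x = 0} ⊂ D' →
      m ∈ latticeOf d S D') :
    ∃ z, z - m ∈ latticeOf d S {x ∈ coneOf d S | ℓ x = 0} ∧
      emb d z ∈ Submodule.span ℝ {x ∈ coneOf d S | ℓ x = 0} ∧ ∀ n : ℕ, 0 < n → u + n • z ∈ S := by
  obtain ⟨w₀, hw₀S, hw₀D, habs⟩ := exists_mem_face_forall_add_nsmul_mem hfg hℓ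
  have hw₀span := Submodule.subset_span (R := ℝ) hw₀D
  obtain ⟨G, hGface, hDG, hGu, hG⟩ := hsn.exists_ssuperset_face_forall_mem hfg hu huD hw₀S habs
  obtain ⟨K, hK⟩ := habs _ hmD
  refine ⟨m + (K + 1) • w₀, ?_, ?_, fun n hn => ?_⟩
  · rw [add_sub_cancel_left]
    exact nsmul_mem (mem_latticeOf_of_mem_span hw₀S hw₀span) _
  · rw [map_add, map_nsmul]
    exact add_mem hmD (nsmul_mem hw₀span _)
  have hmG : m ∈ latticeOf d S G := hmfaces G hGface hDG
  have hw₀G : w₀ ∈ latticeOf d S G := AddSubgroup.subset_closure ⟨hw₀S, hDG.1 hw₀D⟩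
  have huG : u ∈ latticeOf d S G := AddSubgroup.subset_closure ⟨hu, hGu⟩
  refine hG _ (add_mem huG (nsmul_mem (add_mem hmG (nsmul_mem hw₀G _)) n)) ?_
  obtain ⟨n, rfl⟩ : ∃ n', n = n' + 1 := ⟨n - 1, by omega⟩
  have hdiff : emb d (u + (n + 1) • (m + (K + 1) • w₀)) - emb d (u + w₀) =
      (n + 1) • (emb d m + K • emb d w₀) + n • emb d w₀ := by
    simp only [map_add, map_nsmul]
    module
  rw [hdiff]
  refine hDG.1 ⟨?_, by rw [map_add, map_nsmul, map_nsmul, hK.2, hw₀D.2, smul_zero, smul_zero,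
    add_zero]⟩
  unfold coneOf at hK hw₀D ⊢
  exact add_mem (nsmul_mem hK.1 _) (nsmul_mem hw₀D.1 _)

end AffineMonoid

theorem stmt_14_general (d : ℕ) (p : ℕ) (hp : p.Prime) (e : ℕ) (q : ℕ) (hq : q = p ^ e)
    (S : AddSubmonoid (Fin d → ℤ)) (hfg : S.FG)
    (C : Set (Fin d → ℝ)) (hC : C = coneOf d S)
    (hsn : Seminormal d S C)
    (D : Set (Fin d → ℝ)) (hruf : IsRUF d S C D)
    (a u w : Fin d → ℤ) (hu : u ∈ S) (hw : w ∈ S) (hwD : emb d w ∈ D)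
    (heq : ∀ i, a i + u i = (q : ℤ) * w i)
    (hhom : ∀ s ∈ S, (∀ i, (q : ℤ) ∣ a i + s i) →
      (fun i => (a i + s i) / (q : ℤ)) ∈ S) :
    emb d a ∈ Submodule.span ℝ D ∧ emb d u ∈ D := by
  subst hC
  obtain ⟨⟨ℓ, hℓ, rfl⟩, hsat⟩ := hruf
  have hq0 : 0 < q := hq ▸ pow_pos hp.pos e
  have hwspan := Submodule.subset_span (R := ℝ) hwD
  have huD : emb d u ∈ {x ∈ coneOf d S | ℓ x = 0} := by
    by_contra huD
    obtain ⟨m, hmD, hmnot, hmfaces⟩ := exists_of_not_isRelSat ⟨ℓ, hℓ, rfl⟩ hsat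
      fun h => huD (by rw [h]; exact emb_mem_coneOf hu)
    obtain ⟨z, hzm, hzspan, hzS⟩ :=
      exists_sub_mem_latticeOf_forall_add_nsmul_mem hfg hsn hℓ hu huD hmD hmfaces
    have hwz := mem_latticeOf_of_mem_span (add_mem_of_div_mem hq0 heq hhom (hzS q hq0))
      (by simpa using add_mem hwspan hzspan)
    refine hmnot (by simpa using sub_mem (sub_mem hwz (mem_latticeOf_of_mem_span hw hwspan)) hzm)
  refine ⟨?_, huD⟩
  have ha : a = q • w - u := funext fun i => by
    simp only [Pi.sub_apply, nsmul_eq_mul, Pi.mul_apply, Pi.natCast_apply]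
    linear_combination heq i
  rw [ha, map_sub, map_nsmul]
  exact sub_mem (nsmul_mem hwspan q) (Submodule.subset_span huD)

/-- Lemma (in-the-face): let `S` be a seminormal affine monoid whose algebra is F-split
(no face of `C` is a `p`-face), `D` a RUF of `C`, and suppose `π_a(x^u) = x^w ≠ 0` with
`w ∈ S ∩ D`, where `a ∈ (1/q)ℤ^d` gives `π_a ∈ Hom_R(F^e_* R, R)` (i.e.
`(a + (1/q)S) ∩ M ⊆ S`) and `u ∈ (1/q)S`, with `q = p^e`.  Then `a ∈ span D` and
`u ∈ D`.  (`a, u` are encoded by numerator vectors: `π_a(x^u) = x^w` reads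
`a + u = q • w`.) -/
theorem stmt_14 (d : ℕ) (p : ℕ) (hp : p.Prime) (e : ℕ) (q : ℕ) (hq : q = p ^ e)
    (S : AddSubmonoid (Fin d → ℤ)) (hfg : S.FG)
    (hZ : AddSubgroup.closure (S : Set (Fin d → ℤ)) = ⊤)
    (C : Set (Fin d → ℝ)) (hC : C = coneOf d S)
    (hpointed : ∀ x ∈ C, -x ∈ C → x = 0)
    (hsn : Seminormal d S C)
    (hFsplit : ∀ D' : Set (Fin d → ℝ), IsFace d C D' → ¬ pFace d p S D')
    (D : Set (Fin d → ℝ)) (hruf : IsRUF d S C D)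
    (a u w : Fin d → ℤ) (hu : u ∈ S) (hw : w ∈ S) (hwD : emb d w ∈ D)
    (heq : ∀ i, a i + u i = (q : ℤ) * w i)
    (hhom : ∀ s ∈ S, (∀ i, (q : ℤ) ∣ a i + s i) →
      (fun i => (a i + s i) / (q : ℤ)) ∈ S) :
    emb d a ∈ Submodule.span ℝ D ∧ emb d u ∈ D :=
  stmt_14_general d p hp e q hq S hfg C hC hsn D hruf a u w hu hw hwD heq hhom
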